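/- arXiv:0909.4348 — 2 statements merged into one kernel-verified Lean document; each statement's English description precedes it below -/
import Mathlib

section
/- Let f: 2^N → R_+ be a monotone submodular function on a finite ground set N = {1,...,n} with all marginal values in [0,1]. Let X_1,...,X_n be independent {0,1}-valued random variables, R = {i : X_i = 1}, and μ = E[f(R)]. Then for any δ ∈ (0,1), Pr[f(R) ≤ (1-δ)μ] ≤ e^{-μδ²/2}. -/
/-!
Chernoff's method: `P[f(R) ≤ (1-δ)μ] ≤ e^{δ(1-δ)μ} 𝔼[e^{-δ f(R)}]`. The moment generating function
is controlled by adding the ground set one element `a` at a time: `e^{-λ f(R+a)}` factors as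
`e^{-λ Δ_a(R)} e^{-λ f(R)}`, where the marginal `Δ_a` is decreasing by submodularity, so the first
factor is increasing and the second decreasing; Harris' inequality decouples them, and convexity of
`exp` on `Δ_a ∈ [0,1]` gives `𝔼[e^{-λ Δ_a}] ≤ 1 + (e^{-λ}-1) 𝔼[Δ_a]`. This yields
`𝔼[e^{-λ f(R)}] ≤ exp((e^{-λ}-1) μ)`, and `e^{-δ} ≤ 1 - δ + δ²/2` finishes.
-/

open MeasureTheory ProbabilityTheory Finset Real

section BernoulliSubset

variable {ι : Type*} [DecidableEq ι] {p : ι → ℝ}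

noncomputable def bernoulliWeight (p : ι → ℝ) (s S : Finset ι) : ℝ :=
  (∏ i ∈ S, p i) * ∏ i ∈ s \ S, (1 - p i)

/-- `bernoulliExpect p s g` is `𝔼[g R]` for the random subset `R ⊆ s` that contains each `i ∈ s`
independently with probability `p i`. -/
noncomputable def bernoulliExpect (p : ι → ℝ) (s : Finset ι) (g : Finset ι → ℝ) : ℝ :=
  ∑ S ∈ s.powerset, bernoulliWeight p s S * g S

lemma bernoulliWeight_nonneg (hp : ∀ i, p i ∈ Set.Icc (0 : ℝ) 1) (s S : Finset ι) :
    0 ≤ bernoulliWeight p s S :=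
  mul_nonneg (prod_nonneg fun i _ => (hp i).1) (prod_nonneg fun i _ => sub_nonneg.2 (hp i).2)

@[simp]
lemma bernoulliExpect_empty (p : ι → ℝ) (g : Finset ι → ℝ) : bernoulliExpect p ∅ g = g ∅ := by
  simp [bernoulliExpect, bernoulliWeight]

lemma bernoulliExpect_insert {a : ι} {s : Finset ι} (ha : a ∉ s) (g : Finset ι → ℝ) :
    bernoulliExpect p (insert a s) g =
      (1 - p a) * bernoulliExpect p s g + p a * bernoulliExpect p s fun S => g (insert a S) := by
  rw [bernoulliExpect, sum_powerset_insert ha, bernoulliExpect, bernoulliExpect, mul_sum, mul_sum]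
  congr 1 <;> refine sum_congr rfl fun S hS => ?_ <;>
    have haS : a ∉ S := fun h => ha (mem_powerset.1 hS h)
  · rw [bernoulliWeight, bernoulliWeight, insert_sdiff_of_notMem _ haS,
      prod_insert (fun h => ha (mem_sdiff.1 h).1)]
    ring
  · rw [bernoulliWeight, bernoulliWeight, insert_sdiff_insert, sdiff_insert_of_notMem ha,
      prod_insert haS]
    ring

@[simp]
lemma bernoulliExpect_const (p : ι → ℝ) (s : Finset ι) (c : ℝ) :
    bernoulliExpect p s (fun _ => c) = c := by
  have := (prod_add p (fun i => 1 - p i) s).symm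
  simp only [add_sub_cancel, prod_const_one] at this
  simp [bernoulliExpect, bernoulliWeight, ← sum_mul, this]

lemma bernoulliExpect_add (p : ι → ℝ) (s : Finset ι) (g h : Finset ι → ℝ) :
    bernoulliExpect p s (fun S => g S + h S) = bernoulliExpect p s g + bernoulliExpect p s h := by
  simp [bernoulliExpect, mul_add, sum_add_distrib]

lemma bernoulliExpect_sub (p : ι → ℝ) (s : Finset ι) (g h : Finset ι → ℝ) :
    bernoulliExpect p s (fun S => g S - h S) = bernoulliExpect p s g - bernoulliExpect p s h := by
  simp [bernoulliExpect, mul_sub, sum_sub_distrib]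

lemma bernoulliExpect_const_mul (p : ι → ℝ) (s : Finset ι) (c : ℝ) (g : Finset ι → ℝ) :
    bernoulliExpect p s (fun S => c * g S) = c * bernoulliExpect p s g := by
  simp [bernoulliExpect, mul_sum, mul_left_comm]

lemma bernoulliExpect_mono (hp : ∀ i, p i ∈ Set.Icc (0 : ℝ) 1) {s : Finset ι}
    {g h : Finset ι → ℝ} (hgh : g ≤ h) : bernoulliExpect p s g ≤ bernoulliExpect p s h :=
  sum_le_sum fun S _ => mul_le_mul_of_nonneg_left (hgh S) (bernoulliWeight_nonneg hp s S)

lemma bernoulliExpect_nonneg (hp : ∀ i, p i ∈ Set.Icc (0 : ℝ) 1) {s : Finset ι}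
    {g : Finset ι → ℝ} (hg : 0 ≤ g) : 0 ≤ bernoulliExpect p s g :=
  (bernoulliExpect_const p s 0).symm.trans_le (bernoulliExpect_mono hp hg)

theorem bernoulliExpect_mul_le_of_monotone_of_antitone (hp : ∀ i, p i ∈ Set.Icc (0 : ℝ) 1)
    {g h : Finset ι → ℝ} (hg : Monotone g) (hh : Antitone h) (s : Finset ι) :
    bernoulliExpect p s (fun S => g S * h S) ≤ bernoulliExpect p s g * bernoulliExpect p s h := by
  induction s using Finset.induction_on generalizing g h with
  | empty => simp
  | insert a s ha ih =>
    have hg_le : bernoulliExpect p s g ≤ bernoulliExpect p s fun S => g (insert a S) :=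
      bernoulliExpect_mono hp fun S => hg (subset_insert a S)
    have hh_le : (bernoulliExpect p s fun S => h (insert a S)) ≤ bernoulliExpect p s h :=
      bernoulliExpect_mono hp fun S => hh (subset_insert a S)
    have ih' := ih (fun S T hST => hg (insert_subset_insert a hST))
      (fun S T hST => hh (insert_subset_insert a hST))
    simp only [bernoulliExpect_insert ha]
    obtain ⟨hpa0, hpa1⟩ := hp a
    -- the gap is `p (1 - p) (𝔼 g(·+a) - 𝔼 g) (𝔼 h - 𝔼 h(·+a)) ≥ 0`
    nlinarith [mul_le_mul_of_nonneg_left (ih hg hh) (sub_nonneg.2 hpa1),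
      mul_le_mul_of_nonneg_left ih' hpa0, mul_nonneg (mul_nonneg hpa0 (sub_nonneg.2 hpa1))
        (mul_nonneg (sub_nonneg.2 hg_le) (sub_nonneg.2 hh_le))]

lemma antitone_marginal_of_submodular {f : Finset ι → ℝ} (hmono : Monotone f)
    (hsub : ∀ A B, f (A ∪ B) + f (A ∩ B) ≤ f A + f B) (a : ι) :
    Antitone fun S => f (insert a S) - f S := by
  intro S T hST
  by_cases haT : a ∈ T
  · simpa [insert_eq_of_mem haT] using hmono (subset_insert a S)
  · have := hsub (insert a S) T
    rw [insert_union, union_eq_right.2 hST, insert_inter_of_notMem haT,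
      inter_eq_left.2 hST] at this
    dsimp only
    linarith

lemma exp_mul_le_one_add_mul {d : ℝ} (hd0 : 0 ≤ d) (hd1 : d ≤ 1) (x : ℝ) :
    exp (x * d) ≤ 1 + (exp x - 1) * d := by
  have := convexOn_exp.2 (Set.mem_univ x) (Set.mem_univ 0) hd0 (sub_nonneg.2 hd1) (by ring)
  simp only [smul_eq_mul, mul_zero, add_zero, exp_zero, mul_one] at this
  rw [mul_comm]
  linarith

lemma exp_neg_le_one_sub_add_sq_div_two {x : ℝ} (hx : 0 ≤ x) :
    exp (-x) ≤ 1 - x + x ^ 2 / 2 := by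
  rw [exp_neg, inv_le_iff_one_le_mul₀ (exp_pos x)]
  -- (1 - x + x²/2)(1 + x + x²/2) = 1 + x⁴/4
  nlinarith [quadratic_le_exp_of_nonneg hx, sq_nonneg (x - 1), sq_nonneg (x ^ 2)]

lemma bernoulliExpect_exp_mul_le (hp : ∀ i, p i ∈ Set.Icc (0 : ℝ) 1) {d : Finset ι → ℝ}
    (hd0 : 0 ≤ d) (hd1 : d ≤ 1) (x : ℝ) (s : Finset ι) :
    bernoulliExpect p s (fun S => exp (x * d S)) ≤ 1 + (exp x - 1) * bernoulliExpect p s d :=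
  calc _ ≤ bernoulliExpect p s fun S => 1 + (exp x - 1) * d S :=
        bernoulliExpect_mono hp fun S => exp_mul_le_one_add_mul (hd0 S) (hd1 S) x
    _ = _ := by rw [bernoulliExpect_add, bernoulliExpect_const, bernoulliExpect_const_mul]

theorem bernoulliExpect_exp_neg_mul_le (hp : ∀ i, p i ∈ Set.Icc (0 : ℝ) 1) {f : Finset ι → ℝ}
    (hf0 : 0 ≤ f ∅) (hmono : Monotone f) (hanti : ∀ a, Antitone fun S => f (insert a S) - f S)
    (hle : ∀ S a, f (insert a S) - f S ≤ 1) {l : ℝ} (hl : 0 ≤ l) (s : Finset ι) :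
    bernoulliExpect p s (fun S => exp (-l * f S)) ≤
      exp ((exp (-l) - 1) * bernoulliExpect p s f) := by
  set c := exp (-l) - 1 with hc
  induction s using Finset.induction_on with
  | empty =>
    simp only [bernoulliExpect_empty, c]
    exact exp_le_exp.2 (by nlinarith [add_one_le_exp (-l)])
  | insert a s ha ih =>
    have hharris := bernoulliExpect_mul_le_of_monotone_of_antitone hp
      (g := fun S => exp (-l * (f (insert a S) - f S))) (h := fun S => exp (-l * f S))
      (fun S T hST => exp_le_exp.2 (mul_le_mul_of_nonpos_left (hanti a hST) (neg_nonpos.2 hl)))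
      (fun S T hST => exp_le_exp.2 (mul_le_mul_of_nonpos_left (hmono hST) (neg_nonpos.2 hl))) s
    have hmarg := bernoulliExpect_exp_mul_le hp (d := fun S => f (insert a S) - f S)
      (fun S => sub_nonneg.2 (hmono (subset_insert a S))) (fun S => hle S a) (-l) s
    rw [bernoulliExpect_sub, ← hc] at hmarg
    set A := bernoulliExpect p s fun S => exp (-l * f S)
    set μ₀ := bernoulliExpect p s f
    set μ₁ := bernoulliExpect p s fun S => f (insert a S)
    have hA : 0 ≤ A := bernoulliExpect_nonneg hp fun S => (exp_pos _).le
    obtain ⟨hpa0, hpa1⟩ := hp a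
    rw [bernoulliExpect_insert ha, bernoulliExpect_insert ha]
    calc (1 - p a) * A + p a * bernoulliExpect p s (fun S => exp (-l * f (insert a S)))
        = (1 - p a) * A + p a * bernoulliExpect p s
            (fun S => exp (-l * (f (insert a S) - f S)) * exp (-l * f S)) := by
          simp only [← exp_add, ← mul_add, sub_add_cancel]
      _ ≤ A * (p a * (c * (μ₁ - μ₀)) + 1) := by
          nlinarith [mul_le_mul_of_nonneg_left
            (hharris.trans (mul_le_mul_of_nonneg_right hmarg hA)) hpa0]
      _ ≤ exp (c * μ₀) * exp (p a * (c * (μ₁ - μ₀))) :=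
          (mul_le_mul_of_nonneg_left (add_one_le_exp _) hA).trans
            (mul_le_mul_of_nonneg_right ih (exp_pos _).le)
      _ = exp (c * ((1 - p a) * μ₀ + p a * μ₁)) := by rw [← exp_add]; ring_nf

end BernoulliSubset

section RandomSubset

variable {Ω : Type*}

lemma comp_eq_sum_indicator {α : Type*} [Fintype α] (R : Ω → α) (g : α → ℝ) :
    (fun ω => g (R ω)) = fun ω => ∑ a, {ω' | R ω' = a}.indicator (fun _ => g a) ω := by
  funext ω
  rw [sum_eq_single_of_mem (R ω) (mem_univ _) fun a _ ha =>
    Set.indicator_of_notMem (fun h => ha h.symm) _]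
  simp

variable {ι β : Type*} [Fintype ι] [DecidableEq ι] [DecidableEq β] {X : ι → Ω → β} {b : β}

lemma setOf_filter_eq_eq_iInter (S : Finset ι) :
    {ω | univ.filter (fun i => X i ω = b) = S} =
      ⋂ i, X i ⁻¹' (if i ∈ S then {b} else {b}ᶜ) := by
  ext ω
  simp only [Set.mem_ofPred_eq, Set.mem_iInter, Finset.ext_iff, mem_filter, mem_univ, true_and]
  refine forall_congr' fun i => ?_
  split_ifs with hi <;> simp [hi]

variable [MeasurableSpace Ω] {P : Measure Ω}

lemma integrable_comp_of_measurableSet_fiber [IsFiniteMeasure P] {α : Type*} [Fintype α]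
    {R : Ω → α} (hR : ∀ a, MeasurableSet {ω | R ω = a}) (g : α → ℝ) :
    Integrable (fun ω => g (R ω)) P := by
  rw [comp_eq_sum_indicator]
  exact integrable_finsetSum _ fun a _ => (integrable_const (μ := P) (g a)).indicator (hR a)

lemma integral_comp_of_measurableSet_fiber [IsFiniteMeasure P] {α : Type*} [Fintype α]
    {R : Ω → α} (hR : ∀ a, MeasurableSet {ω | R ω = a}) (g : α → ℝ) :
    ∫ ω, g (R ω) ∂P = ∑ a, P.real {ω | R ω = a} * g a := by
  rw [comp_eq_sum_indicator, integral_finsetSum _ fun a _ =>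
    (integrable_const (μ := P) (g a)).indicator (hR a)]
  simp [integral_indicator_const _ (hR _)]

variable [MeasurableSpace β] [MeasurableSingletonClass β]

lemma measurableSet_filter_eq (hmeas : ∀ i, Measurable (X i)) (S : Finset ι) :
    MeasurableSet {ω | univ.filter (fun i => X i ω = b) = S} := by
  rw [setOf_filter_eq_eq_iInter]
  exact .iInter fun i => hmeas i (by split_ifs <;> simp)

lemma measureReal_filter_eq [IsProbabilityMeasure P] (hmeas : ∀ i, Measurable (X i))
    (hindep : iIndepFun X P) (S : Finset ι) :
    P.real {ω | univ.filter (fun i => X i ω = b) = S} =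
      bernoulliWeight (fun i => P.real (X i ⁻¹' {b})) univ S := by
  have hprod := hindep.measure_inter_preimage_eq_mul univ
    (sets := fun i => if i ∈ S then {b} else {b}ᶜ) fun i _ => by split_ifs <;> simp
  simp only [mem_univ, Set.iInter_true] at hprod
  have hfactor : ∀ i, (P (X i ⁻¹' if i ∈ S then {b} else {b}ᶜ)).toReal =
      if i ∈ S then P.real (X i ⁻¹' {b}) else 1 - P.real (X i ⁻¹' {b}) := fun i => by
    split_ifs
    · rfl
    · rw [Set.preimage_compl, ← measureReal_def,
        probReal_compl_eq_one_sub (hmeas i (measurableSet_singleton b))]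
  rw [setOf_filter_eq_eq_iInter, measureReal_def, hprod, ENNReal.toReal_prod, bernoulliWeight]
  simp_rw [hfactor]
  rw [prod_ite]
  congr 2 <;> ext <;> simp

lemma integral_comp_filter_eq_bernoulliExpect [IsProbabilityMeasure P]
    (hmeas : ∀ i, Measurable (X i)) (hindep : iIndepFun X P) (g : Finset ι → ℝ) :
    ∫ ω, g (univ.filter fun i => X i ω = b) ∂P =
      bernoulliExpect (fun i => P.real (X i ⁻¹' {b})) univ g := by
  rw [integral_comp_of_measurableSet_fiber (measurableSet_filter_eq hmeas), bernoulliExpect,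
    powerset_univ]
  simp_rw [measureReal_filter_eq hmeas hindep]

end RandomSubset

theorem stmt_6_general {Ω : Type*} [MeasurableSpace Ω] (P : Measure Ω) [IsProbabilityMeasure P]
    {n : ℕ} (f : Finset (Fin n) → ℝ)
    (hnonneg : ∀ S, 0 ≤ f S)
    (hmono : ∀ S T, S ⊆ T → f S ≤ f T)
    (hsub : ∀ A B, f (A ∪ B) + f (A ∩ B) ≤ f A + f B)
    (hmarg : ∀ (S : Finset (Fin n)) (i : Fin n),
      f (insert i S) - f S ∈ Set.Icc (0:ℝ) 1)
    (X : Fin n → Ω → ℝ)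
    (hmeas : ∀ i, Measurable (X i))
    (hindep : iIndepFun X P)
    (R : Ω → Finset (Fin n))
    (hR : ∀ ω, R ω = Finset.univ.filter fun i => X i ω = 1)
    (m : ℝ) (hm : m = ∫ ω, f (R ω) ∂P)
    (δ : ℝ) (hδ : δ ∈ Set.Ioo (0:ℝ) 1) :
    (P {ω | f (R ω) ≤ (1 - δ) * m}).toReal ≤ Real.exp (-(m * δ ^ 2) / 2) := by
  obtain rfl : R = fun ω => univ.filter fun i => X i ω = 1 := funext hR
  set p : Fin n → ℝ := fun i => P.real (X i ⁻¹' {1})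
  have hp : ∀ i, p i ∈ Set.Icc (0 : ℝ) 1 := fun i => ⟨measureReal_nonneg, measureReal_le_one⟩
  have hmp : m = bernoulliExpect p univ f :=
    hm.trans (integral_comp_filter_eq_bernoulliExpect hmeas hindep f)
  have hm0 : 0 ≤ m := hmp ▸ bernoulliExpect_nonneg hp hnonneg
  have hmono' : Monotone f := fun S T => hmono S T
  have hmgf : mgf (fun ω => f (univ.filter fun i => X i ω = 1)) P (-δ) ≤
      exp ((exp (-δ) - 1) * m) := by
    rw [mgf, integral_comp_filter_eq_bernoulliExpect hmeas hindep (fun S => exp (-δ * f S)), hmp]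
    exact bernoulliExpect_exp_neg_mul_le hp (hnonneg ∅) hmono'
      (antitone_marginal_of_submodular hmono' hsub) (fun S a => (hmarg S a).2) hδ.1.le univ
  calc _ ≤ exp (-(-δ) * ((1 - δ) * m)) * mgf (fun ω => f (univ.filter fun i => X i ω = 1)) P (-δ) :=
        measure_le_le_exp_mul_mgf _ (neg_nonpos.2 hδ.1.le)
          (integrable_comp_of_measurableSet_fiber (measurableSet_filter_eq hmeas)
            fun S => exp (-δ * f S))
    _ ≤ exp (δ * ((1 - δ) * m)) * exp ((exp (-δ) - 1) * m) := by rw [neg_neg]; gcongr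
    _ ≤ exp (-(m * δ ^ 2) / 2) := by
      rw [← exp_add]
      gcongr
      nlinarith [mul_le_mul_of_nonneg_left (exp_neg_le_one_sub_add_sq_div_two hδ.1.le) hm0]

theorem stmt_6 {Ω : Type*} [MeasurableSpace Ω] (P : Measure Ω) [IsProbabilityMeasure P]
    {n : ℕ} (f : Finset (Fin n) → ℝ)
    (hnonneg : ∀ S, 0 ≤ f S)
    (hmono : ∀ S T, S ⊆ T → f S ≤ f T)
    (hsub : ∀ A B, f (A ∪ B) + f (A ∩ B) ≤ f A + f B)
    (hmarg : ∀ (S : Finset (Fin n)) (i : Fin n),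
      f (insert i S) - f S ∈ Set.Icc (0:ℝ) 1)
    (X : Fin n → Ω → ℝ)
    (hmeas : ∀ i, Measurable (X i))
    (h01 : ∀ i ω, X i ω = 0 ∨ X i ω = 1)
    (hindep : iIndepFun X P)
    (R : Ω → Finset (Fin n))
    (hR : ∀ ω, R ω = Finset.univ.filter fun i => X i ω = 1)
    (m : ℝ) (hm : m = ∫ ω, f (R ω) ∂P)
    (δ : ℝ) (hδ : δ ∈ Set.Ioo (0:ℝ) 1) :
    (P {ω | f (R ω) ≤ (1 - δ) * m}).toReal ≤ Real.exp (-(m * δ ^ 2) / 2) :=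
  stmt_6_general P f hnonneg hmono hsub hmarg X hmeas hindep R hR m hm δ hδ
end

section
/- Let F be the multilinear extension of a monotone submodular function f with marginal values in [0,1], λ ∈ [0,1], and x ∈ [0,1]^n with x_i = γ ∈ [0,1], x_j = β ∈ [0,1], β+γ ≤ 1. Define the random vector x' to be x + β·e_i - β·e_j with probability γ/(β+γ), and x - γ·e_i + γ·e_j with probability β/(β+γ). Then E[e^{λ(F(x)-F(x'))}] ≤ e^{λ²βγ(F_j(x)-F_i(x))²}, where F_i, F_j denote the partial derivatives of F at x. -/
/-!
The multilinear extension `F` is affine in each coordinate, so along `e_i - e_j` it is a quadratic: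
`F x - F (x + t (e_i - e_j)) = t D + t² c` with `D = F_j(x) - F_i(x)` and `c` the mixed second
difference of `F`, which is an average of second differences of `f` and hence `≤ 0` by
submodularity. Thus `λ (F x - F x')` is bounded by the two-point variable `X` taking the values
`λβD` and `-λγD` with probabilities `γ/(β+γ)` and `β/(β+γ)`. It has mean zero, and `|X| ≤ 1`
because `F_i, F_j ∈ [0,1]` are averages of marginal values. For `|u| ≤ 1`, `e^u ≤ 1 + u + u²`,
so `E e^X ≤ 1 + E X² ≤ e^{E X²}` and `E X² = λ²βγD²`.
-/

open Finset Function

lemma forall_update_mem {ι α : Type*} [DecidableEq ι] {s : Set α} {x : ι → α}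
    (hx : ∀ k, x k ∈ s) (i : ι) {v : α} (hv : v ∈ s) : ∀ k, update x i v k ∈ s :=
  (forall_update_iff x fun _ w => w ∈ s).2 ⟨hv, fun k _ => hx k⟩

lemma sub_sub_add_nonpos_of_submodular {ι : Type*} [DecidableEq ι] {f : Finset ι → ℝ}
    (hsub : ∀ A B, f (A ∪ B) + f (A ∩ B) ≤ f A + f B) {i j : ι} (hij : i ≠ j) (S : Finset ι) :
    f (insert j (insert i S)) - f (insert i S) - f (insert j S) + f S ≤ 0 := by
  by_cases hi : i ∈ S
  · simp [insert_eq_of_mem hi]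
  by_cases hj : j ∈ S
  · simp [insert_eq_of_mem hj, insert_eq_of_mem (mem_insert_of_mem hj)]
  have hunion : insert i S ∪ insert j S = insert j (insert i S) := by
    ext k
    simp only [mem_union, mem_insert]
    tauto
  have hinter : insert i S ∩ insert j S = S := by
    ext k
    simp only [mem_inter, mem_insert]
    constructor
    · rintro ⟨rfl | hk, rfl | hk'⟩ <;> first | assumption | exact absurd rfl hij
    · exact fun hk => ⟨Or.inr hk, Or.inr hk⟩
  have h := hsub (insert i S) (insert j S)
  rw [hunion, hinter] at h
  linarith

section MultilinearExtension

variable {ι : Type*} [Fintype ι] [DecidableEq ι]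

def multilinearExt (f : Finset ι → ℝ) (x : ι → ℝ) : ℝ :=
  ∑ S, f S * ((∏ i ∈ S, x i) * ∏ i ∈ Sᶜ, (1 - x i))

lemma prod_mul_prod_compl_one_sub (S : Finset ι) (x : ι → ℝ) :
    (∏ i ∈ S, x i) * ∏ i ∈ Sᶜ, (1 - x i) = ∏ i, if i ∈ S then x i else 1 - x i := by
  rw [← prod_mul_prod_compl S]
  congr 1 <;> refine prod_congr rfl fun i hi => ?_ <;> simp_all

lemma sum_univ_finset_eq_sum_powerset_erase {M : Type*} [AddCommMonoid M]
    (g : Finset ι → M) (i : ι) :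
    ∑ S, g S = ∑ t ∈ (univ.erase i).powerset, (g t + g (insert i t)) := by
  rw [sum_add_distrib, ← sum_powerset_insert (notMem_erase i univ), insert_erase (mem_univ i),
    powerset_univ]

lemma multilinearExt_update_eq_sum (f : Finset ι → ℝ) (x : ι → ℝ) (i : ι) (s : ℝ) :
    multilinearExt f (update x i s) = ∑ S, f S *
      ((if i ∈ S then s else 1 - s) * ∏ k ∈ univ.erase i, if k ∈ S then x k else 1 - x k) := by
  refine sum_congr rfl fun S _ => ?_
  rw [prod_mul_prod_compl_one_sub, ← mul_prod_erase _ _ (mem_univ i), update_self]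
  congr 2
  exact prod_congr rfl fun k hk => by rw [update_of_ne (ne_of_mem_erase hk)]

lemma multilinearExt_update (f : Finset ι → ℝ) (x : ι → ℝ) (i : ι) (s : ℝ) :
    multilinearExt f (update x i s) =
      (1 - s) * multilinearExt f (update x i 0) + s * multilinearExt f (update x i 1) := by
  simp only [multilinearExt_update_eq_sum, mul_sum, ← sum_add_distrib]
  refine sum_congr rfl fun S _ => ?_
  split_ifs <;> ring

lemma multilinearExt_insert (f : Finset ι → ℝ) (x : ι → ℝ) (i : ι) :
    multilinearExt (fun S => f (insert i S)) x = multilinearExt f (update x i 1) := by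
  conv_lhs => rw [← update_eq_self i x]
  simp only [multilinearExt_update_eq_sum]
  rw [sum_univ_finset_eq_sum_powerset_erase _ i, sum_univ_finset_eq_sum_powerset_erase _ i]
  refine sum_congr rfl fun t ht => ?_
  have hit : i ∉ t := fun h => by simpa using mem_powerset.1 ht h
  have hrest : (∏ k ∈ univ.erase i, if k ∈ insert i t then x k else 1 - x k) =
      ∏ k ∈ univ.erase i, if k ∈ t then x k else 1 - x k :=
    prod_congr rfl fun k hk => by simp [ne_of_mem_erase hk]
  simp only [insert_idem, mem_insert_self, if_true, hit, if_false, hrest]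
  ring

lemma sum_prod_mul_prod_compl_one_sub (x : ι → ℝ) :
    ∑ S : Finset ι, (∏ i ∈ S, x i) * ∏ i ∈ Sᶜ, (1 - x i) = 1 := by
  rw [← Fintype.prod_add]
  simp

lemma prod_mul_prod_compl_one_sub_nonneg {x : ι → ℝ} (hx : ∀ k, x k ∈ Set.Icc (0 : ℝ) 1)
    (S : Finset ι) : 0 ≤ (∏ i ∈ S, x i) * ∏ i ∈ Sᶜ, (1 - x i) :=
  mul_nonneg (prod_nonneg fun k _ => (hx k).1) (prod_nonneg fun k _ => sub_nonneg.2 (hx k).2)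

lemma multilinearExt_const (a : ℝ) (x : ι → ℝ) : multilinearExt (fun _ => a) x = a := by
  rw [multilinearExt, ← mul_sum, sum_prod_mul_prod_compl_one_sub, mul_one]

lemma multilinearExt_mono {f g : Finset ι → ℝ} (hfg : ∀ S, f S ≤ g S) {x : ι → ℝ}
    (hx : ∀ k, x k ∈ Set.Icc (0 : ℝ) 1) : multilinearExt f x ≤ multilinearExt g x :=
  sum_le_sum fun S _ =>
    mul_le_mul_of_nonneg_right (hfg S) (prod_mul_prod_compl_one_sub_nonneg hx S)

lemma multilinearExt_mem_Icc {f : Finset ι → ℝ} {a b : ℝ} (hf : ∀ S, f S ∈ Set.Icc a b)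
    {x : ι → ℝ} (hx : ∀ k, x k ∈ Set.Icc (0 : ℝ) 1) : multilinearExt f x ∈ Set.Icc a b := by
  constructor
  · simpa only [multilinearExt_const] using multilinearExt_mono (fun S => (hf S).1) hx
  · simpa only [multilinearExt_const] using multilinearExt_mono (fun S => (hf S).2) hx

lemma multilinearExt_sub (f g : Finset ι → ℝ) (x : ι → ℝ) :
    multilinearExt (fun S => f S - g S) x = multilinearExt f x - multilinearExt g x := by
  simp only [multilinearExt, sub_mul, sum_sub_distrib]

lemma multilinearExt_add (f g : Finset ι → ℝ) (x : ι → ℝ) :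
    multilinearExt (fun S => f S + g S) x = multilinearExt f x + multilinearExt g x := by
  simp only [multilinearExt, add_mul, sum_add_distrib]

lemma differentiable_multilinearExt (f : Finset ι → ℝ) :
    Differentiable ℝ (multilinearExt f) := by
  unfold multilinearExt
  fun_prop

lemma fderiv_multilinearExt_single (f : Finset ι → ℝ) (x : ι → ℝ) (i : ι) :
    fderiv ℝ (multilinearExt f) x (Pi.single i 1) =
      multilinearExt f (update x i 1) - multilinearExt f (update x i 0) := by
  have hchain : HasDerivAt (fun s => multilinearExt f (update x i s))
      (fderiv ℝ (multilinearExt f) x (Pi.single i 1)) (x i) := by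
    have := (differentiable_multilinearExt f (update x i (x i))).hasFDerivAt.comp_hasDerivAt
      (x i) (hasDerivAt_update x i (x i))
    rwa [update_eq_self] at this
  have haffine : HasDerivAt (fun s => multilinearExt f (update x i s))
      (multilinearExt f (update x i 1) - multilinearExt f (update x i 0)) (x i) := by
    rw [funext (multilinearExt_update f x i)]
    exact ((((hasDerivAt_id' (x i)).const_sub 1).mul_const _).fun_add
      ((hasDerivAt_id' (x i)).mul_const _)).congr_deriv (by ring)
  exact hchain.unique haffine

lemma fderiv_multilinearExt_single_mem_Icc {f : Finset ι → ℝ} {a b : ℝ} {i : ι}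
    (hf : ∀ S, f (insert i S) - f S ∈ Set.Icc a b) {x : ι → ℝ}
    (hx : ∀ k, x k ∈ Set.Icc (0 : ℝ) 1) :
    fderiv ℝ (multilinearExt f) x (Pi.single i 1) ∈ Set.Icc a b := by
  rw [fderiv_multilinearExt_single, ← update_idem (0 : ℝ) 1 x, ← multilinearExt_insert,
    ← multilinearExt_sub]
  exact multilinearExt_mem_Icc hf (forall_update_mem hx i ⟨le_rfl, zero_le_one⟩)

lemma multilinearExt_update_update {i j : ι} (hij : i ≠ j) (f : Finset ι → ℝ) (x : ι → ℝ)
    (a b : ℝ) :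
    multilinearExt f (update (update x i a) j b) =
      multilinearExt f (update (update x i 0) j 0)
        + a * (multilinearExt f (update (update x i 1) j 0)
          - multilinearExt f (update (update x i 0) j 0))
        + b * (multilinearExt f (update (update x i 0) j 1)
          - multilinearExt f (update (update x i 0) j 0))
        + a * b * (multilinearExt f (update (update x i 1) j 1)
          - multilinearExt f (update (update x i 1) j 0)
          - multilinearExt f (update (update x i 0) j 1)
          + multilinearExt f (update (update x i 0) j 0)) := by
  rw [multilinearExt_update f (update x i a) j b, update_comm hij a (0 : ℝ) x,
    update_comm hij a (1 : ℝ) x, multilinearExt_update f (update x j 0) i a,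
    multilinearExt_update f (update x j 1) i a,
    ← update_comm hij, ← update_comm hij, ← update_comm hij, ← update_comm hij]
  ring

lemma multilinearExt_second_diff_nonpos {i j : ι} (hij : i ≠ j) {f : Finset ι → ℝ}
    (hf : ∀ S, f (insert j (insert i S)) - f (insert i S) - f (insert j S) + f S ≤ 0)
    {x : ι → ℝ} (hx : ∀ k, x k ∈ Set.Icc (0 : ℝ) 1) :
    multilinearExt f (update (update x i 1) j 1) - multilinearExt f (update (update x i 1) j 0)
      - multilinearExt f (update (update x i 0) j 1)
      + multilinearExt f (update (update x i 0) j 0) ≤ 0 := by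
  -- At `z` both coordinates vanish, so each corner is the extension of `f` shifted by inserts.
  set z := update (update x i 0) j 0
  have hz : ∀ a b : ℝ, update (update x i a) j b = update (update z i a) j b := by
    intro a b
    simp only [z, update_comm hij, update_idem]
  have hzi : update z i 0 = z := update_eq_self_iff.2 (by simp [z, hij])
  have hzj : update (update z i 1) j 0 = update z i 1 := by
    rw [update_comm hij, show update z j (0 : ℝ) = z from update_idem _ _ _]
  rw [hz 1 1, hz 1 0, hz 0 1, hzi, hzj,
    ← multilinearExt_insert f (update z i 1) j, ← multilinearExt_insert _ z i,
    ← multilinearExt_insert f z i, ← multilinearExt_insert f z j, ← multilinearExt_sub,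
    ← multilinearExt_sub, ← multilinearExt_add]
  simpa only [multilinearExt_const] using
    multilinearExt_mono hf
      (forall_update_mem (forall_update_mem hx i ⟨le_rfl, zero_le_one⟩) j ⟨le_rfl, zero_le_one⟩)

lemma multilinearExt_sub_update_update_le {i j : ι} (hij : i ≠ j) {f : Finset ι → ℝ}
    (hf : ∀ S, f (insert j (insert i S)) - f (insert i S) - f (insert j S) + f S ≤ 0)
    {x : ι → ℝ} (hx : ∀ k, x k ∈ Set.Icc (0 : ℝ) 1) (t : ℝ) :
    multilinearExt f x - multilinearExt f (update (update x i (x i + t)) j (x j - t)) ≤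
      t * (fderiv ℝ (multilinearExt f) x (Pi.single j 1)
        - fderiv ℝ (multilinearExt f) x (Pi.single i 1)) := by
  have hx₀ : multilinearExt f x = multilinearExt f (update (update x i (x i)) j (x j)) := by
    rw [update_eq_self, update_eq_self]
  have hrow (a : ℝ) : update x i a = update (update x i a) j (x j) := by
    rw [← update_of_ne hij.symm a x, update_eq_self]
  have hcol (b : ℝ) : update x j b = update (update x i (x i)) j b := by
    rw [update_eq_self]
  have hexpand : multilinearExt f x
        - multilinearExt f (update (update x i (x i + t)) j (x j - t)) =
      t * (fderiv ℝ (multilinearExt f) x (Pi.single j 1)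
        - fderiv ℝ (multilinearExt f) x (Pi.single i 1)) +
      t ^ 2 * (multilinearExt f (update (update x i 1) j 1)
        - multilinearExt f (update (update x i 1) j 0)
        - multilinearExt f (update (update x i 0) j 1)
        + multilinearExt f (update (update x i 0) j 0)) := by
    have hDi : fderiv ℝ (multilinearExt f) x (Pi.single i 1) =
        multilinearExt f (update (update x i 1) j (x j))
          - multilinearExt f (update (update x i 0) j (x j)) := by
      rw [fderiv_multilinearExt_single, ← hrow, ← hrow]
    have hDj : fderiv ℝ (multilinearExt f) x (Pi.single j 1) =
        multilinearExt f (update (update x i (x i)) j 1)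
          - multilinearExt f (update (update x i (x i)) j 0) := by
      rw [fderiv_multilinearExt_single, ← hcol, ← hcol]
    rw [hDi, hDj, hx₀, multilinearExt_update_update hij f x (x i) (x j),
      multilinearExt_update_update hij f x (x i + t) (x j - t),
      multilinearExt_update_update hij f x 1 (x j), multilinearExt_update_update hij f x 0 (x j),
      multilinearExt_update_update hij f x (x i) 1, multilinearExt_update_update hij f x (x i) 0]
    ring
  rw [hexpand]
  linarith [mul_nonpos_of_nonneg_of_nonpos (sq_nonneg t)
    (multilinearExt_second_diff_nonpos hij hf hx)]

lemma abs_fderiv_multilinearExt_sub_le_one {f : Finset ι → ℝ}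
    (hf : ∀ S k, f (insert k S) - f S ∈ Set.Icc (0 : ℝ) 1) {x : ι → ℝ}
    (hx : ∀ k, x k ∈ Set.Icc (0 : ℝ) 1) (i j : ι) :
    |fderiv ℝ (multilinearExt f) x (Pi.single j 1)
      - fderiv ℝ (multilinearExt f) x (Pi.single i 1)| ≤ 1 := by
  have hi := fderiv_multilinearExt_single_mem_Icc (hf · i) hx
  have hj := fderiv_multilinearExt_single_mem_Icc (hf · j) hx
  exact abs_sub_le_iff.2 ⟨by linarith [hi.1, hj.2], by linarith [hi.2, hj.1]⟩

end MultilinearExtension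

lemma exp_two_point_le {p q a b : ℝ} (hp : 0 ≤ p) (hq : 0 ≤ q) (hpq : p + q = 1)
    (hmean : p * a + q * b = 0) (ha : |a| ≤ 1) (hb : |b| ≤ 1) :
    p * Real.exp a + q * Real.exp b ≤ Real.exp (p * a ^ 2 + q * b ^ 2) := by
  have hquad {u : ℝ} (hu : |u| ≤ 1) : Real.exp u ≤ 1 + u + u ^ 2 := by
    linarith [(abs_le.1 (Real.abs_exp_sub_one_sub_id_le hu)).2]
  calc p * Real.exp a + q * Real.exp b ≤ p * (1 + a + a ^ 2) + q * (1 + b + b ^ 2) :=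
        add_le_add (mul_le_mul_of_nonneg_left (hquad ha) hp)
          (mul_le_mul_of_nonneg_left (hquad hb) hq)
    _ = (p * a ^ 2 + q * b ^ 2) + 1 := by linear_combination hpq + hmean
    _ ≤ Real.exp (p * a ^ 2 + q * b ^ 2) := Real.add_one_le_exp _

lemma exp_two_point_le_of_add_le_one {β γ c : ℝ} (hβ0 : 0 ≤ β) (hγ0 : 0 ≤ γ)
    (hβγ : β + γ ≤ 1) (hc : |c| ≤ 1) :
    γ / (β + γ) * Real.exp (β * c) + β / (β + γ) * Real.exp (-γ * c) ≤
      Real.exp (β * γ * c ^ 2) := by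
  rcases (add_nonneg hβ0 hγ0).eq_or_lt with hs | hs
  -- `β = γ = 0`: both weights are `_ / 0 = 0`.
  · simp only [← hs, div_zero, zero_mul, add_zero]
    positivity
  have hbound {t : ℝ} (ht0 : 0 ≤ t) (ht1 : t ≤ 1) : |t * c| ≤ 1 := by
    rw [abs_mul, abs_of_nonneg ht0]
    exact mul_le_one₀ ht1 (abs_nonneg c) hc
  calc _ ≤ Real.exp (γ / (β + γ) * (β * c) ^ 2 + β / (β + γ) * (-γ * c) ^ 2) :=
        exp_two_point_le (by positivity) (by positivity) (by field_simp; ring)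
          (by field_simp; ring) (hbound hβ0 (by linarith))
          (by rw [neg_mul, abs_neg]; exact hbound hγ0 (by linarith))
    _ = _ := by
        congr 1
        field_simp

theorem stmt_18_general {n : ℕ} (f : Finset (Fin n) → ℝ)
    (hsub : ∀ A B, f (A ∪ B) + f (A ∩ B) ≤ f A + f B)
    (hmarg : ∀ (S : Finset (Fin n)) (k : Fin n),
      f (insert k S) - f S ∈ Set.Icc (0:ℝ) 1)
    (F : (Fin n → ℝ) → ℝ)
    (hF : ∀ x, F x = ∑ S : Finset (Fin n),
      f S * ((∏ i ∈ S, x i) * ∏ i ∈ Sᶜ, (1 - x i)))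
    (lam : ℝ) (hlam : lam ∈ Set.Icc (0:ℝ) 1)
    (i j : Fin n) (hij : i ≠ j)
    (x : Fin n → ℝ) (hx : ∀ k, x k ∈ Set.Icc (0:ℝ) 1)
    (β γ : ℝ) (hγ : x i = γ) (hβ : x j = β) (hβγ : β + γ ≤ 1)
    (hβ0 : 0 ≤ β) (hγ0 : 0 ≤ γ) :
    γ / (β + γ) *
        Real.exp (lam * (F x - F (Function.update (Function.update x i (γ + β)) j 0)))
      + β / (β + γ) *
        Real.exp (lam * (F x - F (Function.update (Function.update x i 0) j (β + γ))))
      ≤ Real.exp (lam ^ 2 * β * γ *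
          (fderiv ℝ F x (Pi.single j 1) - fderiv ℝ F x (Pi.single i 1)) ^ 2) := by
  obtain ⟨hl0, hl1⟩ := hlam
  obtain rfl : F = multilinearExt f := funext hF
  have hsecond := sub_sub_add_nonpos_of_submodular hsub hij
  have h₁ := multilinearExt_sub_update_update_le hij hsecond hx β
  have h₂ := multilinearExt_sub_update_update_le hij hsecond hx (-γ)
  rw [hγ, hβ, sub_self] at h₁
  rw [hγ, hβ, add_neg_cancel, sub_neg_eq_add] at h₂
  set D := fderiv ℝ (multilinearExt f) x (Pi.single j 1)
    - fderiv ℝ (multilinearExt f) x (Pi.single i 1)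
  have hD : |lam * D| ≤ 1 := by
    rw [abs_mul, abs_of_nonneg hl0]
    exact mul_le_one₀ hl1 (abs_nonneg D) (abs_fderiv_multilinearExt_sub_le_one hmarg hx i j)
  calc _ ≤ γ / (β + γ) * Real.exp (β * (lam * D)) + β / (β + γ) * Real.exp (-γ * (lam * D)) := by
        gcongr ?_ * Real.exp ?_ + ?_ * Real.exp ?_
        · linarith [mul_le_mul_of_nonneg_left h₁ hl0]
        · linarith [mul_le_mul_of_nonneg_left h₂ hl0]
    _ ≤ Real.exp (β * γ * (lam * D) ^ 2) := exp_two_point_le_of_add_le_one hβ0 hγ0 hβγ hD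
    _ = _ := by ring_nf

theorem stmt_18 {n : ℕ} (f : Finset (Fin n) → ℝ)
    (hmono : ∀ S T, S ⊆ T → f S ≤ f T)
    (hsub : ∀ A B, f (A ∪ B) + f (A ∩ B) ≤ f A + f B)
    (hmarg : ∀ (S : Finset (Fin n)) (k : Fin n),
      f (insert k S) - f S ∈ Set.Icc (0:ℝ) 1)
    (F : (Fin n → ℝ) → ℝ)
    (hF : ∀ x, F x = ∑ S : Finset (Fin n),
      f S * ((∏ i ∈ S, x i) * ∏ i ∈ Sᶜ, (1 - x i)))
    (lam : ℝ) (hlam : lam ∈ Set.Icc (0:ℝ) 1)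
    (i j : Fin n) (hij : i ≠ j)
    (x : Fin n → ℝ) (hx : ∀ k, x k ∈ Set.Icc (0:ℝ) 1)
    (β γ : ℝ) (hγ : x i = γ) (hβ : x j = β) (hβγ : β + γ ≤ 1)
    (hβ0 : 0 ≤ β) (hγ0 : 0 ≤ γ) :
    γ / (β + γ) *
        Real.exp (lam * (F x - F (Function.update (Function.update x i (γ + β)) j 0)))
      + β / (β + γ) *
        Real.exp (lam * (F x - F (Function.update (Function.update x i 0) j (β + γ))))
      ≤ Real.exp (lam ^ 2 * β * γ *
          (fderiv ℝ F x (Pi.single j 1) - fderiv ℝ F x (Pi.single i 1)) ^ 2) :=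
  stmt_18_general f hsub hmarg F hF lam hlam i j hij x hx β γ hγ hβ hβγ hβ0 hγ0
end
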